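/- arXiv:1809.07750 — 3 statements merged into one kernel-verified Lean document; each statement's English description precedes it below -/
import Mathlib

section
/- Let f : D^n → ℝ have global sensitivity GS_f = sup over neighboring databases x,y of |f(x) - f(y)| < ∞, and let ε > 0. The mechanism K(x) = f(x) + Lap(GS_f/ε) (adding Laplace noise with scale GS_f/ε) satisfies (ε, 0)-differential privacy: for all neighboring x,y and all measurable S ⊆ ℝ, Pr[K(x) ∈ S] ≤ e^ε · Pr[K(y) ∈ S]. -/
open MeasureTheory Real Classical

/-- Two databases are neighbors if they differ in exactly one entry. -/
def Neighbor {D : Type*} {n : ℕ} (x y : Fin n → D) : Prop :=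
  (Finset.univ.filter (fun i => x i ≠ y i)).card = 1

/-- The Laplace distribution with location 0 and scale `b`, as a measure on ℝ. -/
noncomputable def lapMeasure (b : ℝ) : Measure ℝ :=
  volume.withDensity (fun z : ℝ => ENNReal.ofReal (Real.exp (-|z| / b) / (2 * b)))

/-- The Laplace mechanism: add Laplace noise with scale `GS/ε` to `f x`. -/
noncomputable def laplaceMech {D : Type*} {n : ℕ} (f : (Fin n → D) → ℝ) (b : ℝ)
    (x : Fin n → D) : Measure ℝ :=
  Measure.map (fun z : ℝ => f x + z) (lapMeasure b)

/-- If `f` has global sensitivity at most `GS` and `ε > 0`, the mechanism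
`K(x) = f(x) + Lap(GS/ε)` satisfies `(ε, 0)`-differential privacy: for all
neighboring databases `x, y` and all measurable `S ⊆ ℝ`,
`Pr[K(x) ∈ S] ≤ e^ε · Pr[K(y) ∈ S]`. -/
theorem laplace_mechanism_dp {D : Type*} {n : ℕ} (f : (Fin n → D) → ℝ)
    (GS ε : ℝ) (hGS : 0 < GS) (hε : 0 < ε)
    (hsens : ∀ x y : Fin n → D, Neighbor x y → |f x - f y| ≤ GS) :
    ∀ x y : Fin n → D, Neighbor x y → ∀ S : Set ℝ, MeasurableSet S →
      laplaceMech f (GS / ε) x S ≤ ENNReal.ofReal (Real.exp ε) * laplaceMech f (GS / ε) y S := by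
  intro x y hxy S hS
  set b := GS / ε with hb
  have hbpos : 0 < b := div_pos hGS hε
  have hyx : Neighbor y x := by
    unfold Neighbor at hxy ⊢
    rw [← hxy]
    congr 1
    apply Finset.filter_congr
    intro i _
    simp [ne_comm]
  have hd : |f y - f x| ≤ GS := hsens y x hyx
  set d := f y - f x with hdd
  set g : ℝ → ENNReal := fun z => ENNReal.ofReal (Real.exp (-|z| / b) / (2 * b)) with hg
  set Ax : Set ℝ := (fun z => f x + z) ⁻¹' S with hAx
  set Ay : Set ℝ := (fun z => f y + z) ⁻¹' S with hAy
  have hAxm : MeasurableSet Ax := hS.preimage (measurable_const_add _)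
  have hAym : MeasurableSet Ay := hS.preimage (measurable_const_add _)
  have hgmeas : Measurable g := by
    apply Measurable.ennreal_ofReal
    exact ((measurable_id.abs.neg.div_const b).exp.div_const _)
  have hmapx : laplaceMech f b x S = ∫⁻ z, Ax.indicator g z := by
    rw [laplaceMech, Measure.map_apply (measurable_const_add _) hS, lapMeasure,
      withDensity_apply _ hAxm, lintegral_indicator hAxm g]
  have hmapy : laplaceMech f b y S = ∫⁻ z, Ay.indicator g z := by
    rw [laplaceMech, Measure.map_apply (measurable_const_add _) hS, lapMeasure,
      withDensity_apply _ hAym, lintegral_indicator hAym g]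
  have key : ∀ w : ℝ, g (w + d) ≤ ENNReal.ofReal (Real.exp ε) * g w := by
    intro w
    rw [hg]
    dsimp only
    rw [← ENNReal.ofReal_mul (Real.exp_nonneg ε)]
    apply ENNReal.ofReal_le_ofReal
    have harg : -|w + d| / b ≤ ε + -|w| / b := ?_
    · calc Real.exp (-|w + d| / b) / (2 * b)
          ≤ Real.exp (ε + -|w| / b) / (2 * b) := by gcongr
        _ = Real.exp ε * (Real.exp (-|w| / b) / (2 * b)) := by
            rw [Real.exp_add]; ring
    have h1 : |w| - |w + d| ≤ GS := by
      have h2 : |w| - |w + d| ≤ |w - (w + d)| := abs_sub_abs_le_abs_sub w (w + d)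
      have h3 : |w - (w + d)| = |d| := by rw [abs_sub_comm]; ring_nf
      calc |w| - |w + d| ≤ |d| := by rw [← h3]; exact h2
        _ ≤ GS := hd
    have hεb : ε * b = GS := by rw [hb]; field_simp
    have h4 : (|w| - |w + d|) / b ≤ ε := by
      rw [div_le_iff₀ hbpos]
      linarith [mul_comm ε b]
    have h5 := sub_div |w| |w + d| b
    rw [neg_div, neg_div]
    linarith
  calc laplaceMech f b x S = ∫⁻ z, Ax.indicator g z := hmapx
    _ = ∫⁻ w, Ax.indicator g (w + d) := (lintegral_add_right_eq_self _ d).symm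
    _ ≤ ∫⁻ w, ENNReal.ofReal (Real.exp ε) * Ay.indicator g w := by
        apply lintegral_mono
        intro w
        dsimp only
        by_cases hw : w ∈ Ay
        · have hwx : w + d ∈ Ax := by
            simp only [hAx, Set.mem_preimage]
            have : f x + (w + d) = f y + w := by rw [hdd]; ring
            rw [this]
            exact hw
          rw [Set.indicator_of_mem hwx, Set.indicator_of_mem hw]
          exact key w
        · have hwx : w + d ∉ Ax := by
            simp only [hAx, Set.mem_preimage]
            have : f x + (w + d) = f y + w := by rw [hdd]; ring
            rw [this]
            exact hw
          rw [Set.indicator_of_notMem hwx, Set.indicator_of_notMem hw, mul_zero]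
    _ = ENNReal.ofReal (Real.exp ε) * ∫⁻ w, Ay.indicator g w :=
        lintegral_const_mul _ (hgmeas.indicator hAym)
    _ = ENNReal.ofReal (Real.exp ε) * laplaceMech f b y S := by rw [hmapy]
end

section
/- Sequential composition: if mechanism K₁ : D^n → R₁ is (ε₁, δ₁)-differentially private and for each r ∈ R₁ the mechanism K₂(·, r) : D^n → R₂ is (ε₂, δ₂)-differentially private, then the composed mechanism x ↦ (K₁(x), K₂(x, K₁(x))) is (ε₁ + ε₂, δ₁ + δ₂)-differentially private. -/
open MeasureTheory Real Classical

/-- A randomized mechanism `K` is `(ε, δ)`-differentially private. -/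
def DiffPriv {D : Type*} {n : ℕ} {R : Type*} [MeasurableSpace R]
    (K : (Fin n → D) → Measure R) (ε δ : ℝ) : Prop :=
  ∀ x y : Fin n → D, Neighbor x y → ∀ S : Set R, MeasurableSet S →
    K x S ≤ ENNReal.ofReal (Real.exp ε) * K y S + ENNReal.ofReal δ

/-!
The output of the composed mechanism on `x` is the composition-product `K₁ x ⊗ₘ K₂ x`, whose mass
on `S` is `∫⁻ r, K₂ x r (S_r) ∂(K₁ x)` with `S_r` the slice of `S` over `r`. Apply the guarantee of
`K₂(·, r)` inside the integral, truncated at `1` (the integrand is a probability). The truncated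
integrand is a `[0, 1]`-valued function, and by the layer cake formula the `(ε₁, δ₁)` guarantee of
`K₁` on sets extends to such functions with the same additive slack `δ₁`.
-/

open Set ENNReal ProbabilityTheory

namespace MeasureTheory

variable {α β : Type*} [MeasurableSpace α] [MeasurableSpace β]

theorem lintegral_le_mul_lintegral_add_of_measure_le {μ ν : Measure α} {c d : ℝ≥0∞}
    (hμν : ∀ s, MeasurableSet s → μ s ≤ c * ν s + d)
    {f : α → ℝ≥0∞} (hf : Measurable f) (hf_le_one : ∀ a, f a ≤ 1) :
    ∫⁻ a, f a ∂μ ≤ c * ∫⁻ a, f a ∂ν + d := by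
  set g : α → ℝ := fun a => (f a).toReal
  have hg : Measurable g := hf.ennreal_toReal
  have hg_le_one : ∀ a, g a ≤ 1 := fun a => by
    simpa using ENNReal.toReal_mono one_ne_top (hf_le_one a)
  have layer_cake (ρ : Measure α) : ∫⁻ a, f a ∂ρ = ∫⁻ t in Ioi (0 : ℝ), ρ {a | t < g a} := by
    rw [← lintegral_eq_lintegral_meas_lt ρ (.of_forall fun _ => toReal_nonneg) hg.aemeasurable]
    exact lintegral_congr fun a => (ofReal_toReal ((hf_le_one a).trans_lt one_lt_top).ne).symm
  -- Above level `1` the superlevel sets are empty, so the slack `d` is only paid on `(0, 1]`.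
  have tail_le : ∀ t ∈ Ioi (0 : ℝ),
      μ {a | t < g a} ≤ c * ν {a | t < g a} + (Ioc 0 1).indicator (fun _ => d) t := by
    intro t ht
    by_cases ht1 : t ≤ 1
    · rw [indicator_of_mem (mem_Ioc.mpr ⟨ht, ht1⟩)]
      exact hμν _ (measurableSet_lt measurable_const hg)
    · have : {a | t < g a} = ∅ :=
        eq_empty_of_forall_notMem fun a ha => ht1 (ha.le.trans (hg_le_one a))
      simp [this]
  have hν_tail : Measurable fun t : ℝ => ν {a | t < g a} :=
    Antitone.measurable fun s t hst => measure_mono fun a ha => hst.trans_lt ha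
  rw [layer_cake μ, layer_cake ν]
  calc ∫⁻ t in Ioi (0 : ℝ), μ {a | t < g a}
      ≤ ∫⁻ t in Ioi (0 : ℝ), (c * ν {a | t < g a} + (Ioc 0 1).indicator (fun _ => d) t) :=
        setLIntegral_mono' measurableSet_Ioi tail_le
    _ = c * (∫⁻ t in Ioi (0 : ℝ), ν {a | t < g a})
          + ∫⁻ t in Ioi (0 : ℝ), (Ioc 0 1).indicator (fun _ => d) t := by
        rw [lintegral_add_right _ (measurable_const.indicator measurableSet_Ioc),
          lintegral_const_mul c hν_tail]
    _ = c * (∫⁻ t in Ioi (0 : ℝ), ν {a | t < g a}) + d := by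
        rw [lintegral_indicator measurableSet_Ioc, setLIntegral_const,
          Measure.restrict_apply measurableSet_Ioc, inter_eq_left.mpr Ioc_subset_Ioi_self,
          Real.volume_Ioc]
        simp

theorem Measure.bind_map_prodMk_eq_compProd (μ : Measure α) [SFinite μ]
    (κ : Kernel α β) [IsSFiniteKernel κ] :
    μ.bind (fun a => (κ a).map (Prod.mk a)) = μ ⊗ₘ κ := by
  have hmap : ∀ a {s : Set (α × β)}, MeasurableSet s →
      (κ a).map (Prod.mk a) s = κ a (Prod.mk a ⁻¹' s) :=
    fun a _ hs => Measure.map_apply measurable_prodMk_left hs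
  have hmeas : Measurable fun a => (κ a).map (Prod.mk a) :=
    Measure.measurable_of_measurable_coe _ fun s hs => by
      simpa only [hmap _ hs] using Kernel.measurable_kernel_prodMk_left hs
  ext s hs
  rw [Measure.bind_apply hs hmeas.aemeasurable, Measure.compProd_apply hs]
  exact lintegral_congr fun a => hmap a hs

theorem Measure.compProd_apply_le_mul_add {μ ν : Measure α} [IsProbabilityMeasure μ]
    [SFinite ν] {κ η : Kernel α β} [IsMarkovKernel κ] [IsSFiniteKernel η] {c₁ c₂ d₁ d₂ : ℝ≥0∞}
    (hμν : ∀ s, MeasurableSet s → μ s ≤ c₁ * ν s + d₁)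
    (hκη : ∀ a t, MeasurableSet t → κ a t ≤ c₂ * η a t + d₂)
    {s : Set (α × β)} (hs : MeasurableSet s) :
    (μ ⊗ₘ κ) s ≤ c₁ * c₂ * (ν ⊗ₘ η) s + (d₁ + d₂) := by
  set g : α → ℝ≥0∞ := fun a => min 1 (c₂ * η a (Prod.mk a ⁻¹' s))
  have hg : Measurable g :=
    measurable_const.min ((Kernel.measurable_kernel_prodMk_left hs).const_mul c₂)
  have hκ_le : ∀ a, κ a (Prod.mk a ⁻¹' s) ≤ g a + d₂ := fun a =>
    calc κ a (Prod.mk a ⁻¹' s) ≤ min 1 (c₂ * η a (Prod.mk a ⁻¹' s) + d₂) :=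
          le_min prob_le_one (hκη a _ (measurable_prodMk_left hs))
      _ ≤ min (1 + d₂) (c₂ * η a (Prod.mk a ⁻¹' s) + d₂) := by gcongr; exact le_self_add
      _ = g a + d₂ := min_add_add_right _ _ _
  rw [Measure.compProd_apply hs, Measure.compProd_apply hs]
  calc ∫⁻ a, κ a (Prod.mk a ⁻¹' s) ∂μ
      ≤ ∫⁻ a, (g a + d₂) ∂μ := lintegral_mono hκ_le
    _ = ∫⁻ a, g a ∂μ + d₂ := by
        rw [lintegral_add_right _ measurable_const, lintegral_const, measure_univ, mul_one]
    _ ≤ c₁ * ∫⁻ a, g a ∂ν + d₁ + d₂ := by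
        gcongr
        exact lintegral_le_mul_lintegral_add_of_measure_le hμν hg fun a => min_le_left _ _
    _ ≤ c₁ * (c₂ * ∫⁻ a, η a (Prod.mk a ⁻¹' s) ∂ν) + d₁ + d₂ := by
        rw [← lintegral_const_mul c₂ (Kernel.measurable_kernel_prodMk_left hs)]
        gcongr with a
        exact min_le_right _ _
    _ = c₁ * c₂ * ∫⁻ a, η a (Prod.mk a ⁻¹' s) ∂ν + (d₁ + d₂) := by
        rw [mul_assoc, add_assoc]

end MeasureTheory

theorem sequential_composition_general {D : Type*} {n : ℕ}
    {R₁ R₂ : Type*} [MeasurableSpace R₁] [MeasurableSpace R₂]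
    (K₁ : (Fin n → D) → Measure R₁) (K₂ : (Fin n → D) → R₁ → Measure R₂)
    (ε₁ ε₂ δ₁ δ₂ : ℝ) (hδ₁ : 0 ≤ δ₁) (hδ₂ : 0 ≤ δ₂)
    (hprob₁ : ∀ x, IsProbabilityMeasure (K₁ x))
    (hprob₂ : ∀ x r, IsProbabilityMeasure (K₂ x r))
    (hmeas : ∀ x, Measurable (K₂ x))
    (h₁ : DiffPriv K₁ ε₁ δ₁)
    (h₂ : ∀ r : R₁, DiffPriv (fun x => K₂ x r) ε₂ δ₂) :
    DiffPriv (fun x => (K₁ x).bind (fun r => (K₂ x r).map (fun s => (r, s))))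
      (ε₁ + ε₂) (δ₁ + δ₂) := by
  intro x y hxy S hS
  let κ : (Fin n → D) → Kernel R₁ R₂ := fun z => ⟨K₂ z, hmeas z⟩
  have : ∀ z, IsMarkovKernel (κ z) := fun z => ⟨hprob₂ z⟩
  have := hprob₁ x
  have := hprob₁ y
  change (K₁ x).bind (fun r => (κ x r).map (Prod.mk r)) S
    ≤ _ * (K₁ y).bind (fun r => (κ y r).map (Prod.mk r)) S + _
  rw [Measure.bind_map_prodMk_eq_compProd, Measure.bind_map_prodMk_eq_compProd]
  calc (K₁ x ⊗ₘ κ x) S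
      ≤ ENNReal.ofReal (exp ε₁) * ENNReal.ofReal (exp ε₂) * (K₁ y ⊗ₘ κ y) S
          + (ENNReal.ofReal δ₁ + ENNReal.ofReal δ₂) :=
        Measure.compProd_apply_le_mul_add (h₁ x y hxy) (fun r => h₂ r x y hxy) hS
    _ = ENNReal.ofReal (exp (ε₁ + ε₂)) * (K₁ y ⊗ₘ κ y) S + ENNReal.ofReal (δ₁ + δ₂) := by
        rw [exp_add, ENNReal.ofReal_mul (exp_nonneg ε₁), ENNReal.ofReal_add hδ₁ hδ₂]

/-- Sequential composition: if `K₁` is `(ε₁, δ₁)`-DP and, for each possible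
output `r` of `K₁`, the mechanism `K₂(·, r)` is `(ε₂, δ₂)`-DP, then the
composed mechanism `x ↦ (K₁(x), K₂(x, K₁(x)))` is `(ε₁+ε₂, δ₁+δ₂)`-DP. -/
theorem sequential_composition {D : Type*} {n : ℕ}
    {R₁ R₂ : Type*} [MeasurableSpace R₁] [MeasurableSpace R₂]
    (K₁ : (Fin n → D) → Measure R₁) (K₂ : (Fin n → D) → R₁ → Measure R₂)
    (ε₁ ε₂ δ₁ δ₂ : ℝ) (hε₁ : 0 ≤ ε₁) (hε₂ : 0 ≤ ε₂) (hδ₁ : 0 ≤ δ₁) (hδ₂ : 0 ≤ δ₂)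
    (hprob₁ : ∀ x, IsProbabilityMeasure (K₁ x))
    (hprob₂ : ∀ x r, IsProbabilityMeasure (K₂ x r))
    (hmeas : ∀ x, Measurable (K₂ x))
    (h₁ : DiffPriv K₁ ε₁ δ₁)
    (h₂ : ∀ r : R₁, DiffPriv (fun x => K₂ x r) ε₂ δ₂) :
    DiffPriv (fun x => (K₁ x).bind (fun r => (K₂ x r).map (fun s => (r, s))))
      (ε₁ + ε₂) (δ₁ + δ₂) :=
  sequential_composition_general K₁ K₂ ε₁ ε₂ δ₁ δ₂ hδ₁ hδ₂ hprob₁ hprob₂ hmeas h₁ h₂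
end

section
/- Harmonic-mean bound used in WPINQ join sensitivity: for all nonnegative reals a, a', b with a + b > 0 and a' + b > 0, |a·b/(a+b) − a'·b/(a'+b)| ≤ |a − a'|. -/
/-- Harmonic-mean bound used in the WPINQ join sensitivity analysis: for all
nonnegative reals `a, a', b` with `a + b > 0` and `a' + b > 0`,
`|a·b/(a+b) − a'·b/(a'+b)| ≤ |a − a'|`. -/
theorem harmonic_mean_bound (a a' b : ℝ) (ha : 0 ≤ a) (ha' : 0 ≤ a') (hb : 0 ≤ b)
    (hab : 0 < a + b) (hab' : 0 < a' + b) :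
    |a * b / (a + b) - a' * b / (a' + b)| ≤ |a - a'| := by
  have key : a * b / (a + b) - a' * b / (a' + b) = (a - a') * b ^ 2 / ((a + b) * (a' + b)) := by
    field_simp
    ring
  rw [key, abs_div, abs_mul]
  have h1 : |b ^ 2| = b ^ 2 := abs_of_nonneg (sq_nonneg b)
  have h2 : |(a + b) * (a' + b)| = (a + b) * (a' + b) :=
    abs_of_pos (mul_pos hab hab')
  rw [h1, h2, div_le_iff₀ (mul_pos hab hab')]
  have hbb : b ^ 2 ≤ (a + b) * (a' + b) := by nlinarith
  calc |a - a'| * b ^ 2 ≤ |a - a'| * ((a + b) * (a' + b)) :=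
        mul_le_mul_of_nonneg_left hbb (abs_nonneg _)
    _ = |a - a'| * ((a + b) * (a' + b)) := rfl
end
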